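/- Lossless convexification of regularized covariance steering (single-stage KKT form). Let A be an invertible n×n real matrix, B an n×m real matrix, R an m×m symmetric positive definite matrix, Σ an n×n symmetric positive definite matrix, U an m×n real matrix, Y an m×m symmetric positive semidefinite matrix with Y ≠ 0, Λ an n×n symmetric real matrix, Γ an m×m symmetric positive semidefinite matrix, v ∈ ℝᵐ a vector, and c ≥ 0, η ≥ 0 real scalars. Suppose the following KKT conditions hold: (i) stationarity in U: Γ U Σ⁻¹ + Bᵀ Λ A = 0; (ii) stationarity in Y: R + (c/‖Y‖_F) Y − Γ + η v vᵀ + Bᵀ Λ B = 0, where ‖Y‖_F is the Frobenius norm of Y; (iii) primal feasibility: Y − U Σ⁻¹ Uᵀ is positive semidefinite; (iv) complementary slackness: tr(Γ (U Σ⁻¹ Uᵀ − Y)) = 0. Then Y = U Σ⁻¹ Uᵀ, i.e., the semidefinite relaxation is tight. -/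

import Mathlib

/-!
Stationarity in `U` together with the invertibility of `A` gives `Bᵀ Λ B = -Γ M` for
`M = U Σ⁻¹ A⁻¹ B`, so stationarity in `Y` reads `Γ (1 + M) = R + s Y + η v vᵀ` with `s ≥ 0`.
The right-hand side is positive definite, and a vector in the kernel of the positive
semidefinite `Γ` annihilates the quadratic form of `Γ (1 + M)`; hence `Γ ≻ 0`.
Complementary slackness says `tr (Γ D) = 0` for `D = Y - U Σ⁻¹ Uᵀ ⪰ 0`, and writing
`D = Cᴴ C` this is `tr (C Γ Cᴴ) = 0`, which forces `C = 0` because `Γ ≻ 0`.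
-/

open Matrix

namespace Matrix

variable {𝕜 n m : Type*} [RCLike 𝕜] [Fintype n]

open scoped ComplexOrder

lemma PosSemidef.posDef_of_posDef_mul {A N : Matrix n n 𝕜} (hA : A.PosSemidef)
    (hAN : (A * N).PosDef) : A.PosDef := by
  refine .of_dotProduct_mulVec_pos hA.1 fun x hx => ?_
  refine (hA.dotProduct_mulVec_nonneg x).lt_of_ne fun hxAx => ?_
  have hAx : star x ᵥ* A = 0 := by
    rw [← star_star (star x ᵥ* A), star_vecMul, star_star, hA.1.eq,
      (hA.dotProduct_mulVec_zero_iff x).mp hxAx.symm, star_zero]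
  have := hAN.dotProduct_mulVec_pos hx
  rw [← mulVec_mulVec, dotProduct_mulVec, hAx, zero_dotProduct] at this
  exact this.false

lemma PosDef.eq_zero_of_conjTranspose_mul_mul_eq_zero [Fintype m] {A : Matrix n n 𝕜}
    {B : Matrix n m 𝕜} (hA : A.PosDef) (h : Bᴴ * A * B = 0) : B = 0 := by
  classical
  have hB : ∀ x, B *ᵥ x = 0 := fun x => by
    by_contra hBx
    have := hA.dotProduct_mulVec_pos hBx
    rw [star_mulVec, dotProduct_mulVec, vecMul_vecMul, ← dotProduct_mulVec, mulVec_mulVec, h,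
      zero_mulVec, dotProduct_zero] at this
    exact this.false
  exact ext_of_mulVec_single fun i => by rw [hB, zero_mulVec]

open scoped MatrixOrder in
lemma PosDef.eq_zero_of_trace_mul_eq_zero {A D : Matrix n n 𝕜} (hA : A.PosDef)
    (hD : D.PosSemidef) (h : (A * D).trace = 0) : D = 0 := by
  classical
  obtain ⟨B, rfl⟩ := CStarAlgebra.nonneg_iff_eq_star_mul_self.mp hD.nonneg
  rw [star_eq_conjTranspose] at h ⊢
  have hBAB : B * A * Bᴴ = 0 := by
    rw [← (hA.posSemidef.mul_mul_conjTranspose_same B).trace_eq_zero_iff, trace_mul_cycle,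
      trace_mul_comm, h]
  rw [hA.eq_zero_of_conjTranspose_mul_mul_eq_zero (B := Bᴴ) (by rwa [conjTranspose_conjTranspose]),
    zero_mul]

end Matrix

theorem lossless_convexification_regularized_covariance_steering_general
    {n m : ℕ}
    (A : Matrix (Fin n) (Fin n) ℝ) (hA : IsUnit A.det)
    (B : Matrix (Fin n) (Fin m) ℝ)
    (R : Matrix (Fin m) (Fin m) ℝ) (hR : R.PosDef)
    (S : Matrix (Fin n) (Fin n) ℝ)
    (U : Matrix (Fin m) (Fin n) ℝ)
    (Y : Matrix (Fin m) (Fin m) ℝ) (hY : Y.PosSemidef)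
    (Λ : Matrix (Fin n) (Fin n) ℝ)
    (Γ : Matrix (Fin m) (Fin m) ℝ) (hΓ : Γ.PosSemidef)
    (v : Fin m → ℝ) (c η : ℝ) (hc : 0 ≤ c) (hη : 0 ≤ η)
    -- (i) stationarity in `U`
    (hstatU : Γ * U * S⁻¹ + Bᵀ * Λ * A = 0)
    -- (ii) stationarity in `Y`, where `√(tr (Yᵀ Y))` is the Frobenius norm of `Y`
    (hstatY : R + (c / Real.sqrt ((Yᵀ * Y).trace)) • Y - Γ + η • vecMulVec v v
        + Bᵀ * Λ * B = 0)
    -- (iii) primal feasibility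
    (hprimal : (Y - U * S⁻¹ * Uᵀ).PosSemidef)
    -- (iv) complementary slackness
    (hslack : (Γ * (U * S⁻¹ * Uᵀ - Y)).trace = 0) :
    Y = U * S⁻¹ * Uᵀ := by
  set s := c / Real.sqrt ((Yᵀ * Y).trace)
  have hP : (s • Y + η • vecMulVec v v).PosSemidef :=
    (hY.smul (div_nonneg hc (Real.sqrt_nonneg _))).add
      ((posSemidef_vecMulVec_self_star v).smul hη)
  have hBΛB : Bᵀ * Λ * B = -(Γ * (U * S⁻¹ * A⁻¹ * B)) :=
    calc Bᵀ * Λ * B = Bᵀ * Λ * A * (A⁻¹ * B) := by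
          rw [Matrix.mul_assoc (Bᵀ * Λ), mul_nonsing_inv_cancel_left _ _ hA]
      _ = -(Γ * (U * S⁻¹ * A⁻¹ * B)) := by
          rw [eq_neg_of_add_eq_zero_right hstatU]; simp only [Matrix.neg_mul, Matrix.mul_assoc]
  have hΓ_mul : Γ * (1 + U * S⁻¹ * A⁻¹ * B) = R + (s • Y + η • vecMulVec v v) :=
    calc Γ * (1 + U * S⁻¹ * A⁻¹ * B)
        = Γ * (1 + U * S⁻¹ * A⁻¹ * B)
          + (R + s • Y - Γ + η • vecMulVec v v + Bᵀ * Λ * B) := by rw [hstatY, add_zero]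
      _ = R + (s • Y + η • vecMulVec v v) := by rw [hBΛB, Matrix.mul_add, Matrix.mul_one]; abel
  have hΓ_pd : Γ.PosDef := hΓ.posDef_of_posDef_mul (hΓ_mul ▸ hR.add_posSemidef hP)
  refine sub_eq_zero.mp (hΓ_pd.eq_zero_of_trace_mul_eq_zero hprimal ?_)
  rw [← neg_sub, Matrix.mul_neg, trace_neg, hslack, neg_zero]

/-- Lossless convexification of regularized covariance steering
(single-stage KKT form). Under the stationarity, primal feasibility, and complementary
slackness KKT conditions, the semidefinite relaxation `Y ⪰ U Σ⁻¹ Uᵀ` is tight: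
`Y = U Σ⁻¹ Uᵀ`. -/
theorem lossless_convexification_regularized_covariance_steering
    {n m : ℕ}
    (A : Matrix (Fin n) (Fin n) ℝ) (hA : IsUnit A.det)
    (B : Matrix (Fin n) (Fin m) ℝ)
    (R : Matrix (Fin m) (Fin m) ℝ) (hR : R.PosDef)
    (S : Matrix (Fin n) (Fin n) ℝ) (hS : S.PosDef)
    (U : Matrix (Fin m) (Fin n) ℝ)
    (Y : Matrix (Fin m) (Fin m) ℝ) (hY : Y.PosSemidef) (hY0 : Y ≠ 0)
    (Λ : Matrix (Fin n) (Fin n) ℝ) (hΛ : Λ.IsSymm)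
    (Γ : Matrix (Fin m) (Fin m) ℝ) (hΓ : Γ.PosSemidef)
    (v : Fin m → ℝ) (c η : ℝ) (hc : 0 ≤ c) (hη : 0 ≤ η)
    -- (i) stationarity in `U`
    (hstatU : Γ * U * S⁻¹ + Bᵀ * Λ * A = 0)
    -- (ii) stationarity in `Y`, where `√(tr (Yᵀ Y))` is the Frobenius norm of `Y`
    (hstatY : R + (c / Real.sqrt ((Yᵀ * Y).trace)) • Y - Γ + η • vecMulVec v v
        + Bᵀ * Λ * B = 0)
    -- (iii) primal feasibility
    (hprimal : (Y - U * S⁻¹ * Uᵀ).PosSemidef)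
    -- (iv) complementary slackness
    (hslack : (Γ * (U * S⁻¹ * Uᵀ - Y)).trace = 0) :
    Y = U * S⁻¹ * Uᵀ :=
  lossless_convexification_regularized_covariance_steering_general A hA B R hR S U Y hY Λ Γ hΓ v c η
    hc hη hstatU hstatY hprimal hslack
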